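/- arXiv:2007.10961 — 2 statements merged into one kernel-verified Lean document; each statement's English description precedes it below -/
import Mathlib

section
/- Let X be a real m×n matrix with singular value decomposition X = UΣVᵀ where all singular values are strictly positive (X has full rank min(m,n)). Then the nuclear norm is differentiable at X and its gradient is U Vᵀ, i.e., for any direction H, the derivative of t ↦ ‖X + tH‖_* at t = 0 equals ⟨U Vᵀ, H⟩. -/
/-!
The nuclear norm is squeezed between two bounds that touch at `X`. From below,
`⟨Z, A⟩ ≤ ‖A‖_*` for every contraction `Z` (Cauchy–Schwarz, column by column, in an eigenbasis
of `Aᵀ A`); with `Z = U Vᵀ` this gives the affine minorant `‖X‖_* + t ⟨U Vᵀ, H⟩` of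
`‖X + t H‖_*`. From above, `2 ‖A‖_* ≤ tr (A Q Aᵀ) + tr P` whenever `P Q = 1` with `Q ⪰ 0`
(expand `tr ((R - P) Q (R - P)) ≥ 0` for the square root `R` of `Aᵀ A`); with `P = V Σ Vᵀ` this
gives the same affine function plus `O(t²)`. The upper bound needs `V` square; when `m < n`,
transposing exchanges the roles of `U` and `V`, because `‖Aᵀ‖_* = ‖A‖_*`: the characteristic
polynomials of `Aᵀ A` and `A Aᵀ` differ by a power of the indeterminate.
-/

open Matrix

/-- Frobenius inner product. -/
noncomputable def frobInner {m n : ℕ} (A B : Matrix (Fin m) (Fin n) ℝ) : ℝ :=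
  ∑ i, ∑ j, A i j * B i j

/-- Nuclear norm: sum of the singular values of `A`
(square roots of the eigenvalues of `Aᵀ A`). -/
noncomputable def nuclearNorm {m n : ℕ} (A : Matrix (Fin m) (Fin n) ℝ) : ℝ :=
  ∑ i, Real.sqrt ((Matrix.isHermitian_conjTranspose_mul_self A).eigenvalues i)

section

variable {m n : ℕ}

lemma frobInner_eq_trace (A B : Matrix (Fin m) (Fin n) ℝ) :
    frobInner A B = (A * Bᵀ).trace := by
  simp [frobInner, trace, mul_apply]

lemma frobInner_transpose (A B : Matrix (Fin m) (Fin n) ℝ) :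
    frobInner Aᵀ Bᵀ = frobInner A B :=
  Finset.sum_comm

lemma frobInner_add_smul (A B C : Matrix (Fin m) (Fin n) ℝ) (t : ℝ) :
    frobInner A (B + t • C) = frobInner A B + t * frobInner A C := by
  simp only [frobInner, Matrix.add_apply, Matrix.smul_apply, smul_eq_mul, mul_add,
    Finset.sum_add_distrib, Finset.mul_sum, mul_left_comm t]

lemma frobInner_mul_orthogonal (A B : Matrix (Fin m) (Fin n) ℝ)
    {W : Matrix (Fin n) (Fin n) ℝ} (hW : W * Wᵀ = 1) :
    frobInner (A * W) (B * W) = frobInner A B := by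
  rw [frobInner_eq_trace, frobInner_eq_trace, transpose_mul, Matrix.mul_assoc,
    ← Matrix.mul_assoc W, hW, Matrix.one_mul]

lemma frobInner_le_sum_sqrt_mul_sqrt (C B : Matrix (Fin m) (Fin n) ℝ) :
    frobInner C B ≤ ∑ j, √((Cᵀ * C) j j) * √((Bᵀ * B) j j) := by
  rw [frobInner, Finset.sum_comm]
  refine Finset.sum_le_sum fun j _ => ?_
  simpa [mul_apply, sq] using Real.sum_mul_le_sqrt_mul_sqrt Finset.univ (C · j) (B · j)

lemma exists_orthogonal_transpose_mul_self_eq_diagonal (A : Matrix (Fin m) (Fin n) ℝ) :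
    ∃ W : Matrix (Fin n) (Fin n) ℝ, Wᵀ * W = 1 ∧ W * Wᵀ = 1 ∧
      (A * W)ᵀ * (A * W) = diagonal (isHermitian_conjTranspose_mul_self A).eigenvalues := by
  set hA := isHermitian_conjTranspose_mul_self A
  refine ⟨hA.eigenvectorUnitary, ?_, ?_, ?_⟩
  · rw [← conjTranspose_eq_transpose_of_trivial, ← star_eq_conjTranspose]
    exact Unitary.star_mul_self_of_mem hA.eigenvectorUnitary.2
  · rw [← conjTranspose_eq_transpose_of_trivial, ← star_eq_conjTranspose]
    exact Unitary.mul_star_self_of_mem hA.eigenvectorUnitary.2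
  · simpa only [Unitary.conjStarAlgAut_apply, Unitary.coe_star, star_star,
      ← conjTranspose_eq_transpose_of_trivial, conjTranspose_mul, ← star_eq_conjTranspose,
      Matrix.mul_assoc, RCLike.ofReal_real_eq_id, CompTriple.comp_eq] using
      hA.conjStarAlgAut_star_eigenvectorUnitary

lemma frobInner_le_nuclearNorm {Z : Matrix (Fin m) (Fin n) ℝ}
    (hZ : (1 - Zᵀ * Z).PosSemidef) (A : Matrix (Fin m) (Fin n) ℝ) :
    frobInner Z A ≤ nuclearNorm A := by
  obtain ⟨W, hW, hW', hAW⟩ := exists_orthogonal_transpose_mul_self_eq_diagonal A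
  have hZW : ∀ j, ((Z * W)ᵀ * (Z * W)) j j ≤ 1 := fun j => by
    have := (hZ.conjTranspose_mul_mul_same W).diag_nonneg (i := j)
    rw [conjTranspose_eq_transpose_of_trivial, Matrix.mul_sub, Matrix.sub_mul, Matrix.mul_one,
      hW] at this
    simpa [transpose_mul, Matrix.mul_assoc] using this
  calc frobInner Z A = frobInner (Z * W) (A * W) := (frobInner_mul_orthogonal Z A hW').symm
    _ ≤ ∑ j, √(((Z * W)ᵀ * (Z * W)) j j) * √(((A * W)ᵀ * (A * W)) j j) :=
      frobInner_le_sum_sqrt_mul_sqrt _ _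
    _ ≤ nuclearNorm A := by
      refine Finset.sum_le_sum fun j _ => ?_
      rw [hAW, diagonal_apply_eq]
      exact mul_le_of_le_one_left (Real.sqrt_nonneg _) (Real.sqrt_le_one.mpr (hZW j))

lemma exists_symm_sqrt_transpose_mul_self (A : Matrix (Fin m) (Fin n) ℝ) :
    ∃ R : Matrix (Fin n) (Fin n) ℝ, Rᵀ = R ∧ R * R = Aᵀ * A ∧ R.trace = nuclearNorm A := by
  obtain ⟨W, hW, hW', hAW⟩ := exists_orthogonal_transpose_mul_self_eq_diagonal A
  set s := fun i => √((isHermitian_conjTranspose_mul_self A).eigenvalues i)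
  refine ⟨W * diagonal s * Wᵀ, ?_, ?_, ?_⟩
  · simp [transpose_mul, Matrix.mul_assoc]
  · have hss : diagonal s * diagonal s = (A * W)ᵀ * (A * W) := by
      rw [hAW, diagonal_mul_diagonal]
      exact congrArg diagonal (funext fun i =>
        Real.mul_self_sqrt (eigenvalues_conjTranspose_mul_self_nonneg A i))
    calc W * diagonal s * Wᵀ * (W * diagonal s * Wᵀ)
        = W * (diagonal s * diagonal s) * Wᵀ := by
          simp only [Matrix.mul_assoc, ← Matrix.mul_assoc Wᵀ W, hW, Matrix.one_mul]
      _ = Aᵀ * A := by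
          rw [hss, transpose_mul]
          simp only [Matrix.mul_assoc, hW', Matrix.mul_one, ← Matrix.mul_assoc W Wᵀ,
            Matrix.one_mul]
  · rw [trace_mul_comm, ← Matrix.mul_assoc, hW, Matrix.one_mul, trace_diagonal]
    rfl

lemma two_mul_nuclearNorm_le (A : Matrix (Fin m) (Fin n) ℝ)
    {P Q : Matrix (Fin n) (Fin n) ℝ} (hQ : Q.PosSemidef) (hPQ : P * Q = 1) :
    2 * nuclearNorm A ≤ (A * Q * Aᵀ).trace + P.trace := by
  obtain ⟨R, hR, hRR, htr⟩ := exists_symm_sqrt_transpose_mul_self A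
  have hQP : Q * P = 1 := mul_eq_one_comm.mp hPQ
  have hQT : Qᵀ = Q := by simpa [conjTranspose_eq_transpose_of_trivial] using hQ.isHermitian.eq
  have hPT : Pᵀ = P := by
    calc Pᵀ = Pᵀ * Qᵀ * P := by rw [hQT, Matrix.mul_assoc, hQP, Matrix.mul_one]
      _ = P := by rw [← transpose_mul, hQP, transpose_one, Matrix.one_mul]
  have hexp : ((R - P)ᴴ * Q * (R - P)).trace = (A * Q * Aᵀ).trace - 2 * R.trace + P.trace := by
    rw [conjTranspose_eq_transpose_of_trivial, transpose_sub, hR, hPT]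
    simp only [Matrix.sub_mul, Matrix.mul_sub, trace_sub, Matrix.mul_assoc, hQP, hPQ,
      Matrix.mul_one]
    rw [trace_mul_comm R, Matrix.mul_assoc, hRR, trace_mul_comm A, Matrix.mul_assoc,
      Matrix.one_mul, Matrix.one_mul]
    ring
  linarith [(hQ.conjTranspose_mul_mul_same (R - P)).trace_nonneg, htr]

lemma two_mul_nuclearNorm_add_smul_le {X Z : Matrix (Fin m) (Fin n) ℝ}
    (H : Matrix (Fin m) (Fin n) ℝ) {P Q : Matrix (Fin n) (Fin n) ℝ} (hQ : Q.PosSemidef)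
    (hPQ : P * Q = 1) (hXQ : X * Q = Z) (t : ℝ) :
    2 * nuclearNorm (X + t • H) ≤
      frobInner Z X + P.trace + 2 * t * frobInner Z H + t ^ 2 * (H * Q * Hᵀ).trace := by
  have hQT : Qᵀ = Q := by simpa [conjTranspose_eq_transpose_of_trivial] using hQ.isHermitian.eq
  have hcross : (H * Q * Xᵀ).trace = (X * Q * Hᵀ).trace := by
    rw [← trace_transpose]
    simp only [transpose_mul, transpose_transpose, hQT, Matrix.mul_assoc]
  have h := two_mul_nuclearNorm_le (X + t • H) hQ hPQ
  simp only [transpose_add, transpose_smul, Matrix.add_mul, Matrix.mul_add, Matrix.smul_mul,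
    Matrix.mul_smul, trace_add, trace_smul, smul_eq_mul, hcross, hXQ] at h
  rw [← frobInner_eq_trace, ← frobInner_eq_trace] at h
  linarith

lemma nuclearNorm_eq_sum_sqrt_roots (A : Matrix (Fin m) (Fin n) ℝ) :
    nuclearNorm A = ((Aᵀ * A).charpoly.roots.map Real.sqrt).sum := by
  rw [← conjTranspose_eq_transpose_of_trivial,
    (isHermitian_conjTranspose_mul_self A).roots_charpoly_eq_eigenvalues, Multiset.map_map]
  rfl

open Polynomial in
lemma sum_sqrt_roots_X_pow_mul (k : ℕ) {p : ℝ[X]} (hp : p ≠ 0) :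
    (((X ^ k * p).roots).map Real.sqrt).sum = (p.roots.map Real.sqrt).sum := by
  rw [roots_mul (mul_ne_zero (pow_ne_zero k X_ne_zero) hp), roots_X_pow]
  simp [Multiset.map_nsmul, Multiset.sum_nsmul]

open Polynomial in
lemma nuclearNorm_transpose (A : Matrix (Fin m) (Fin n) ℝ) :
    nuclearNorm Aᵀ = nuclearNorm A := by
  have h := congrArg (fun p : ℝ[X] => (p.roots.map Real.sqrt).sum) (charpoly_mul_comm' A Aᵀ)
  simp only [sum_sqrt_roots_X_pow_mul _ (charpoly_monic _).ne_zero] at h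
  rw [nuclearNorm_eq_sum_sqrt_roots, nuclearNorm_eq_sum_sqrt_roots, transpose_transpose, h]

open Asymptotics in
lemma hasDerivAt_zero_of_sq_sandwich {f : ℝ → ℝ} {a c C : ℝ} (hlow : ∀ t, a + t * c ≤ f t)
    (hup : ∀ t, f t ≤ a + t * c + C * t ^ 2) : HasDerivAt f c 0 := by
  have hf0 : f 0 = a := le_antisymm (by simpa using hup 0) (by simpa using hlow 0)
  rw [hasDerivAt_iff_isLittleO_nhds_zero]
  refine IsBigO.trans_isLittleO (g := fun t : ℝ => t ^ 2) ?_ (isLittleO_pow_id one_lt_two)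
  refine IsBigO.of_bound |C| (Filter.Eventually.of_forall fun t => ?_)
  rw [zero_add, hf0, smul_eq_mul, Real.norm_eq_abs, Real.norm_eq_abs,
    abs_of_nonneg (sq_nonneg t), abs_le]
  constructor <;> nlinarith [hlow t, hup t, le_abs_self C, sq_nonneg t]

lemma hasDerivAt_nuclearNorm_of_orthogonal_right {κ : Type*} [Fintype κ]
    [DecidableEq κ] {U : Matrix (Fin m) κ ℝ} {V : Matrix (Fin n) κ ℝ} {σ : κ → ℝ}
    (hU : Uᵀ * U = 1) (hV : Vᵀ * V = 1) (hV' : V * Vᵀ = 1) (hσ : ∀ i, 0 < σ i)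
    (H : Matrix (Fin m) (Fin n) ℝ) :
    HasDerivAt (fun t : ℝ => nuclearNorm (U * diagonal σ * Vᵀ + t • H))
      (frobInner (U * Vᵀ) H) 0 := by
  set X := U * diagonal σ * Vᵀ
  set Z := U * Vᵀ
  set P := V * diagonal σ * Vᵀ
  set Q := V * diagonal σ⁻¹ * Vᵀ
  have hZ : (1 - Zᵀ * Z).PosSemidef := by
    have : Zᵀ * Z = 1 := by
      simp only [Z, transpose_mul, transpose_transpose, Matrix.mul_assoc, ← Matrix.mul_assoc Uᵀ,
        hU, Matrix.one_mul, hV']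
    rw [this, sub_self]
    exact PosSemidef.zero
  have hQ : Q.PosSemidef := by
    have hσ' : (diagonal σ⁻¹).PosSemidef :=
      posSemidef_diagonal_iff.mpr fun i => (inv_pos.mpr (hσ i)).le
    simpa only [conjTranspose_eq_transpose_of_trivial] using hσ'.mul_mul_conjTranspose_same V
  have hσσ : diagonal σ * diagonal σ⁻¹ = 1 := by
    rw [diagonal_mul_diagonal, ← diagonal_one]
    exact congrArg diagonal (funext fun i => mul_inv_cancel₀ (hσ i).ne')
  have hPQ : P * Q = 1 := by
    simp only [P, Q, Matrix.mul_assoc, ← Matrix.mul_assoc Vᵀ V, hV, Matrix.one_mul]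
    rw [← Matrix.mul_assoc (diagonal σ), hσσ, Matrix.one_mul, hV']
  have hXQ : X * Q = Z := by
    simp only [X, Q, Z, Matrix.mul_assoc, ← Matrix.mul_assoc Vᵀ V, hV, Matrix.one_mul]
    rw [← Matrix.mul_assoc (diagonal σ), hσσ, Matrix.one_mul]
  have hZX : frobInner Z X = (diagonal σ).trace := by
    rw [frobInner_eq_trace]
    simp only [Z, X, transpose_mul, transpose_transpose, diagonal_transpose, Matrix.mul_assoc,
      ← Matrix.mul_assoc Vᵀ V, hV, Matrix.one_mul]
    rw [trace_mul_comm, Matrix.mul_assoc, hU, Matrix.mul_one]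
  have hP : P.trace = (diagonal σ).trace := by
    rw [trace_mul_comm, ← Matrix.mul_assoc, hV, Matrix.one_mul]
  refine hasDerivAt_zero_of_sq_sandwich (a := (diagonal σ).trace) (C := (H * Q * Hᵀ).trace / 2)
    (fun t => ?_) (fun t => ?_)
  · rw [← hZX, ← frobInner_add_smul]
    exact frobInner_le_nuclearNorm hZ _
  · linarith [two_mul_nuclearNorm_add_smul_le H hQ hPQ hXQ t]

lemma hasDerivAt_nuclearNorm_of_orthogonal_left {κ : Type*} [Fintype κ]
    [DecidableEq κ] {U : Matrix (Fin m) κ ℝ} {V : Matrix (Fin n) κ ℝ} {σ : κ → ℝ}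
    (hU : Uᵀ * U = 1) (hU' : U * Uᵀ = 1) (hV : Vᵀ * V = 1) (hσ : ∀ i, 0 < σ i)
    (H : Matrix (Fin m) (Fin n) ℝ) :
    HasDerivAt (fun t : ℝ => nuclearNorm (U * diagonal σ * Vᵀ + t • H))
      (frobInner (U * Vᵀ) H) 0 := by
  have h := hasDerivAt_nuclearNorm_of_orthogonal_right hV hU hU' hσ Hᵀ
  rw [← frobInner_transpose, transpose_mul, transpose_transpose]
  convert h using 2 with t
  rw [← nuclearNorm_transpose]
  simp only [transpose_add, transpose_smul, transpose_mul, transpose_transpose,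
    diagonal_transpose, Matrix.mul_assoc]

end

/-- At a full-rank matrix `X` with compact SVD `X = U Σ Vᵀ`, all singular values
positive, the nuclear norm is differentiable with gradient `U Vᵀ`. -/
theorem nuclearNorm_gradient_at_full_rank (m n : ℕ)
    (X : Matrix (Fin m) (Fin n) ℝ)
    (U : Matrix (Fin m) (Fin (min m n)) ℝ)
    (V : Matrix (Fin n) (Fin (min m n)) ℝ)
    (σ : Fin (min m n) → ℝ)
    (hU : Uᵀ * U = 1) (hV : Vᵀ * V = 1)
    (hσ : ∀ i, 0 < σ i)
    (hX : X = U * Matrix.diagonal σ * Vᵀ) :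
    ∀ H : Matrix (Fin m) (Fin n) ℝ,
      HasDerivAt (fun t : ℝ => nuclearNorm (X + t • H)) (frobInner (U * Vᵀ) H) 0 := by
  intro H
  subst hX
  rcases le_total n m with hnm | hmn
  · have hV' : V * Vᵀ = 1 := (mul_eq_one_comm_of_card_eq _ _ _ (by simp [hnm])).mp hV
    exact hasDerivAt_nuclearNorm_of_orthogonal_right hU hV hV' hσ H
  · have hU' : U * Uᵀ = 1 := (mul_eq_one_comm_of_card_eq _ _ _ (by simp [hmn])).mp hU
    exact hasDerivAt_nuclearNorm_of_orthogonal_left hU hU' hV hσ H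
end

section
/- Let R₁,…,R_{n_f} and shapes X₁,…,X_{n_f} ∈ ℝ^{3×n_p} (centered) be such that the rotations minimize the total Procrustes cost Σᵢ ‖Rᵢ Xᵢ − (1/n_f)Σⱼ Rⱼ Xⱼ‖_F². Then at a stationary point with Rᵢ = I (w.l.o.g.), for each k the matrix Σ_{i≠k} Xᵢ X_kᵀ is symmetric. -/
/-!
Rotations preserve Frobenius norms, so the cost is `Σ ‖Xᵢ‖² - ‖Σ Rⱼ Xⱼ‖² / n_f` and the
identities maximize `‖Σ Rⱼ Xⱼ‖`. Moving only `R_k = G` and expanding the square, this says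
`tr (Mᵀ G) ≤ tr M` for all `G ∈ SO(3)`, where `M = Σ_{i ≠ k} Xᵢ X_kᵀ`. For a rotation by `t` in
a coordinate plane this reads `a cos t + b sin t ≤ a` with `b` an entry of `M - Mᵀ`, which
forces `b = 0`.
-/

open Matrix

/-- Squared Frobenius norm. -/
noncomputable def frobSq {m n : ℕ} (A : Matrix (Fin m) (Fin n) ℝ) : ℝ :=
  ∑ i, ∑ j, (A i j) ^ 2

/- At `t = arg (a + b i)` the left side is `√(a² + b²)`. -/
theorem eq_zero_of_forall_mul_cos_add_mul_sin_le {a b : ℝ}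
    (h : ∀ t, a * Real.cos t + b * Real.sin t ≤ a) : b = 0 := by
  set z : ℂ := ⟨a, b⟩
  rcases eq_or_ne z 0 with hz | hz
  · exact congrArg Complex.im hz
  have hnorm : 0 < ‖z‖ := norm_pos_iff.mpr hz
  have hsq : ‖z‖ ^ 2 = a ^ 2 + b ^ 2 := by
    rw [Complex.sq_norm, Complex.normSq_apply]; ring
  have hle : ‖z‖ ≤ a := by
    have := h (Complex.arg z)
    rw [Complex.cos_arg hz, Complex.sin_arg] at this
    rw [← mul_le_mul_iff_of_pos_right hnorm]
    field_simp at this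
    nlinarith
  nlinarith

section Frobenius

variable {m n : ℕ}

theorem frobSq_eq_trace (A : Matrix (Fin m) (Fin n) ℝ) : frobSq A = (Aᵀ * A).trace := by
  simp only [frobSq, trace, diag, mul_apply, transpose_apply, sq]
  exact Finset.sum_comm

theorem trace_transpose_mul_comm (A B : Matrix (Fin m) (Fin n) ℝ) :
    (Aᵀ * B).trace = (Bᵀ * A).trace := by
  rw [← trace_transpose, transpose_mul, transpose_transpose]

theorem frobSq_add (A B : Matrix (Fin m) (Fin n) ℝ) :
    frobSq (A + B) = frobSq A + 2 * (Aᵀ * B).trace + frobSq B := by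
  simp only [frobSq_eq_trace, transpose_add, Matrix.add_mul, Matrix.mul_add, trace_add,
    trace_transpose_mul_comm B A]
  ring

theorem frobSq_mul_of_transpose_mul_self {G : Matrix (Fin m) (Fin m) ℝ} (hG : Gᵀ * G = 1)
    (A : Matrix (Fin m) (Fin n) ℝ) : frobSq (G * A) = frobSq A := by
  rw [frobSq_eq_trace, frobSq_eq_trace, transpose_mul, Matrix.mul_assoc, ← Matrix.mul_assoc Gᵀ,
    hG, Matrix.one_mul]

theorem sum_frobSq_sub_mean {N : ℕ} (A : Fin N → Matrix (Fin m) (Fin n) ℝ) :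
    ∑ i, frobSq (A i - (N : ℝ)⁻¹ • ∑ j, A j)
      = ∑ i, frobSq (A i) - (N : ℝ)⁻¹ * frobSq (∑ j, A j) := by
  rcases Nat.eq_zero_or_pos N with rfl | _
  · simp
  set S := ∑ j, A j
  have hterm : ∀ i, frobSq (A i - (N : ℝ)⁻¹ • S) =
      frobSq (A i) - 2 * (N : ℝ)⁻¹ * ((A i)ᵀ * S).trace + ((N : ℝ)⁻¹) ^ 2 * frobSq S := by
    intro i
    rw [sub_eq_add_neg, ← neg_smul, frobSq_add]
    simp only [frobSq_eq_trace, transpose_smul, Matrix.smul_mul, Matrix.mul_smul, trace_smul,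
      smul_eq_mul]
    ring
  have hcross : ∑ i, ((A i)ᵀ * S).trace = frobSq S := by
    rw [frobSq_eq_trace, ← trace_sum, ← Matrix.sum_mul, ← transpose_sum]
  simp only [hterm, Finset.sum_add_distrib, Finset.sum_sub_distrib, ← Finset.mul_sum, hcross,
    Finset.sum_const, Finset.card_univ, Fintype.card_fin, nsmul_eq_mul]
  field_simp
  ring

theorem trace_mul_transpose_le_of_frobSq_le {G : Matrix (Fin m) (Fin m) ℝ} (hG : Gᵀ * G = 1)
    {A Y : Matrix (Fin m) (Fin n) ℝ} (h : frobSq (G * A + Y) ≤ frobSq (A + Y)) :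
    ((Y * Aᵀ)ᵀ * G).trace ≤ (Y * Aᵀ).trace := by
  rw [frobSq_add, frobSq_add, frobSq_mul_of_transpose_mul_self hG,
    trace_transpose_mul_comm (G * A), trace_transpose_mul_comm A] at h
  have hlhs : ((Y * Aᵀ)ᵀ * G).trace = (Yᵀ * (G * A)).trace := by
    rw [transpose_mul, transpose_transpose, ← trace_mul_cycle, Matrix.mul_assoc]
  have hrhs : (Y * Aᵀ).trace = (Yᵀ * A).trace := by
    rw [trace_mul_comm, ← trace_transpose, transpose_mul, transpose_transpose]
  rw [hlhs, hrhs]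
  linarith

end Frobenius

namespace Matrix

theorem trace_submatrix_equiv {n R : Type*} [Fintype n] [AddCommMonoid R] (M : Matrix n n R)
    (σ : Equiv.Perm n) : (M.submatrix σ σ).trace = M.trace :=
  Equiv.sum_comp σ fun i => M i i

variable {n : Type*} [Fintype n] [DecidableEq n]

def IsRotation (G : Matrix n n ℝ) : Prop :=
  Gᵀ * G = 1 ∧ G.det = 1

def IsRotationTraceMaximal (M : Matrix n n ℝ) : Prop :=
  ∀ G, IsRotation G → (Mᵀ * G).trace ≤ M.trace

theorem IsRotation.one : IsRotation (1 : Matrix n n ℝ) := by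
  simp [IsRotation]

theorem IsRotation.submatrix {G : Matrix n n ℝ} (hG : IsRotation G) (σ : Equiv.Perm n) :
    IsRotation (G.submatrix σ σ) := by
  refine ⟨?_, by rw [det_submatrix_equiv_self, hG.2]⟩
  rw [transpose_submatrix, submatrix_mul_equiv, hG.1, submatrix_one_equiv]

theorem IsRotationTraceMaximal.submatrix {M : Matrix n n ℝ} (hM : IsRotationTraceMaximal M)
    (σ : Equiv.Perm n) : IsRotationTraceMaximal (M.submatrix σ σ) := by
  intro G hG
  have hG' : (G.submatrix σ.symm σ.symm).submatrix σ σ = G := by ext; simp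
  rw [trace_submatrix_equiv, transpose_submatrix, ← hG', submatrix_mul_equiv,
    trace_submatrix_equiv]
  exact hM _ (hG.submatrix σ.symm)

noncomputable def rotationZ (t : ℝ) : Matrix (Fin 3) (Fin 3) ℝ :=
  !![Real.cos t, -Real.sin t, 0; Real.sin t, Real.cos t, 0; 0, 0, 1]

theorem isRotation_rotationZ (t : ℝ) : IsRotation (rotationZ t) := by
  have h := Real.sin_sq_add_cos_sq t
  constructor
  · ext i j
    fin_cases i <;> fin_cases j <;>
      simp [rotationZ, mul_apply, Fin.sum_univ_three] <;> nlinarith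
  · simp [rotationZ, det_fin_three]
    nlinarith

theorem trace_transpose_mul_rotationZ (M : Matrix (Fin 3) (Fin 3) ℝ) (t : ℝ) :
    (Mᵀ * rotationZ t).trace
      = (M 0 0 + M 1 1) * Real.cos t + (M 1 0 - M 0 1) * Real.sin t + M 2 2 := by
  simp [trace, mul_apply, Fin.sum_univ_three, rotationZ]
  ring

theorem IsRotationTraceMaximal.apply_one_zero {M : Matrix (Fin 3) (Fin 3) ℝ}
    (hM : IsRotationTraceMaximal M) : M 1 0 = M 0 1 := by
  have hb : M 1 0 - M 0 1 = 0 :=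
    eq_zero_of_forall_mul_cos_add_mul_sin_le (a := M 0 0 + M 1 1) fun t => by
      have := hM _ (isRotation_rotationZ t)
      rw [trace_transpose_mul_rotationZ, trace_fin_three] at this
      linarith
  linarith

theorem IsRotationTraceMaximal.transpose_eq {M : Matrix (Fin 3) (Fin 3) ℝ}
    (hM : IsRotationTraceMaximal M) : Mᵀ = M := by
  -- the transpositions `(1 2)` and `(0 2)` move the entries at `(0, 2)` and `(1, 2)` to `(0, 1)`
  have h01 := hM.apply_one_zero
  have h02 := (hM.submatrix (Equiv.swap 1 2)).apply_one_zero
  have h12 := (hM.submatrix (Equiv.swap 0 2)).apply_one_zero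
  simp [Equiv.swap_apply_of_ne_of_ne] at h02 h12
  ext i j
  fin_cases i <;> fin_cases j <;> simp [*]
end Matrix

theorem generalized_procrustes_stationarity_general (nf np : ℕ)
    (X : Fin nf → Matrix (Fin 3) (Fin np) ℝ)
    (hmin : ∀ R : Fin nf → Matrix (Fin 3) (Fin 3) ℝ,
      (∀ i, (R i)ᵀ * R i = 1 ∧ (R i).det = 1) →
      (∑ i, frobSq (X i - (nf : ℝ)⁻¹ • ∑ j, X j)) ≤
      (∑ i, frobSq (R i * X i - (nf : ℝ)⁻¹ • ∑ j, R j * X j))) :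
    ∀ k : Fin nf,
      (∑ i ∈ Finset.univ.erase k, X i * (X k)ᵀ)ᵀ
        = ∑ i ∈ Finset.univ.erase k, X i * (X k)ᵀ := by
  intro k
  rw [← Matrix.sum_mul]
  refine IsRotationTraceMaximal.transpose_eq fun G hG =>
    trace_mul_transpose_le_of_frobSq_le hG.1 ?_
  set R := Function.update (1 : Fin nf → Matrix (Fin 3) (Fin 3) ℝ) k G
  have hR : ∀ i, IsRotation (R i) := by
    intro i
    rcases eq_or_ne i k with rfl | hi
    · simpa [R] using hG
    · simpa [R, hi] using IsRotation.one
  have hsumR : ∑ j, R j * X j = G * X k + ∑ j ∈ Finset.univ.erase k, X j := by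
    rw [← Finset.add_sum_erase _ _ (Finset.mem_univ k)]
    congr 1
    · simp [R]
    · exact Finset.sum_congr rfl fun j hj => by simp [R, Finset.ne_of_mem_erase hj]
  have hsum : ∑ j, X j = X k + ∑ j ∈ Finset.univ.erase k, X j :=
    (Finset.add_sum_erase _ _ (Finset.mem_univ k)).symm
  have hcost := hmin R hR
  rw [sum_frobSq_sub_mean, sum_frobSq_sub_mean, hsumR, hsum,
    Finset.sum_congr rfl fun i _ => frobSq_mul_of_transpose_mul_self (hR i).1 (X i)] at hcost
  have hpos : (0 : ℝ) < (nf : ℝ)⁻¹ := by have := k.pos; positivity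
  exact le_of_mul_le_mul_left (by linarith) hpos

/-- First-order stationarity of generalized Procrustes alignment to the mean:
if the identity rotations minimize the total cost
`Σᵢ ‖Rᵢ Xᵢ − (1/n_f) Σⱼ Rⱼ Xⱼ‖_F²` over tuples of rotations, then for each `k`
the matrix `Σ_{i≠k} Xᵢ Xₖᵀ` is symmetric. -/
theorem generalized_procrustes_stationarity (nf np : ℕ)
    (X : Fin nf → Matrix (Fin 3) (Fin np) ℝ)
    (hcentered : ∀ i, X i *ᵥ (fun _ => (1 : ℝ)) = 0)
    (hmin : ∀ R : Fin nf → Matrix (Fin 3) (Fin 3) ℝ,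
      (∀ i, (R i)ᵀ * R i = 1 ∧ (R i).det = 1) →
      (∑ i, frobSq (X i - (nf : ℝ)⁻¹ • ∑ j, X j)) ≤
      (∑ i, frobSq (R i * X i - (nf : ℝ)⁻¹ • ∑ j, R j * X j))) :
    ∀ k : Fin nf,
      (∑ i ∈ Finset.univ.erase k, X i * (X k)ᵀ)ᵀ
        = ∑ i ∈ Finset.univ.erase k, X i * (X k)ᵀ :=
  generalized_procrustes_stationarity_general nf np X hmin
end
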